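/- arXiv:2605.20345 — 2 statements merged into one kernel-verified Lean document; each statement's English description precedes it below -/
import Mathlib

section
/- Let d ≥ 1, let g : ℝ^d → ℝ be a probability density with g(z) > 0 for all z, let f : ℝ^d → ℝ be a nonnegative Lebesgue-integrable function, and let φ : ℝ^d → ℝ be a nonnegative bounded measurable function. Define the importance weight w(z) = f(z)/g(z). Then for every n ≥ 1, ∫_{(ℝ^d)^n} [ (∑_{i=1}^n w(z_i) φ(z_i)) / (∑_{j=1}^n w(z_j)) ] · [ (1/n) ∑_{j=1}^n w(z_j) ] · ∏_{k=1}^n g(z_k) dz_1 ⋯ dz_n = ∫_{ℝ^d} φ(z) f(z) dz, where the ratio is taken to be 0 whenever its denominator is 0. (This is Proposition 5 tested against φ: drawing z from the self-normalized discrete distribution ∑_i w_i δ_{z_i} / ∑_j w_j under the weighted joint π̂(θ, z_{1:n}, y) = ((1/n)∑_i w_i) π̂(z_{1:n}|θ,y) recovers the true joint π(θ, z, y) with f(z) = π(θ)π(z|θ)π(y|θ,z).) -/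
/-! Multiplying the self-normalized ratio by the total weight cancels its denominator; when the
total weight vanishes, so does every (nonnegative) weight and hence the numerator. Since
`w (z i) * g (z i) = f (z i)`, the integrand becomes `(1/n) ∑ i, φ (z i) f (z i) ∏_{k ≠ i} g (z k)`,
and by Fubini each summand integrates to `∫ φ f`, because `g` integrates to `1`. -/

open MeasureTheory Finset

theorem sum_mul_div_sum_mul_sum {ι K : Type*} [Semifield K] [PartialOrder K] [IsOrderedRing K]
    (s : Finset ι) {w : ι → K} (a : ι → K) (hw : ∀ i ∈ s, 0 ≤ w i) :
    (∑ i ∈ s, w i * a i) / (∑ i ∈ s, w i) * ∑ i ∈ s, w i = ∑ i ∈ s, w i * a i :=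
  div_mul_cancel_of_imp fun h => sum_eq_zero fun i hi => by
    rw [(sum_eq_zero_iff_of_nonneg hw).1 h i hi, zero_mul]

theorem div_mul_prod_eq_mul_prod_erase {ι K : Type*} [DecidableEq ι] [CommGroupWithZero K]
    {s : Finset ι} {i : ι} (hi : i ∈ s) (a : K) {b : ι → K} (hb : b i ≠ 0) :
    a / b i * ∏ k ∈ s, b k = a * ∏ k ∈ s.erase i, b k := by
  rw [← mul_prod_erase s b hi, ← mul_assoc, div_mul_cancel₀ _ hb]

theorem mul_prod_erase_eq_prod_update {ι E M : Type*} [Fintype ι] [DecidableEq ι] [CommMonoid M]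
    (g h : E → M) (i : ι) (z : ι → E) :
    h (z i) * ∏ k ∈ univ.erase i, g (z k) = ∏ k, Function.update (fun _ => g) i h k (z k) := by
  rw [← mul_prod_erase univ _ (mem_univ i), Function.update_self]
  congr 1
  exact prod_congr rfl fun k hk => by rw [Function.update_of_ne (ne_of_mem_erase hk)]

section Marginal

variable {ι E 𝕜 : Type*} [Fintype ι] [DecidableEq ι] [RCLike 𝕜] [MeasurableSpace E]
  {μ : Measure E} [SigmaFinite μ]

theorem integrable_mul_prod_erase {g h : E → 𝕜} (hg : Integrable g μ) (hh : Integrable h μ)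
    (i : ι) :
    Integrable (fun z : ι → E => h (z i) * ∏ k ∈ univ.erase i, g (z k))
      (Measure.pi fun _ => μ) := by
  simp_rw [mul_prod_erase_eq_prod_update]
  refine Integrable.fintype_prod fun k => ?_
  rcases eq_or_ne k i with rfl | hk
  · simpa using hh
  · simpa [hk] using hg

theorem integral_mul_prod_erase {g : E → 𝕜} (hg : ∫ x, g x ∂μ = 1) (h : E → 𝕜) (i : ι) :
    ∫ z : ι → E, h (z i) * ∏ k ∈ univ.erase i, g (z k) ∂Measure.pi (fun _ => μ)
      = ∫ x, h x ∂μ := by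
  simp_rw [mul_prod_erase_eq_prod_update, integral_fintype_prod_eq_prod,
    ← mul_prod_erase univ _ (mem_univ i), Function.update_self]
  rw [prod_eq_one fun k hk => by rw [Function.update_of_ne (ne_of_mem_erase hk), hg], mul_one]

end Marginal

theorem self_normalized_recovery_unbiased_general
    (d : ℕ)
    (g : (Fin d → ℝ) → ℝ) (hg_prob : ∫ z, g z = 1)
    (hg_pos : ∀ z, 0 < g z)
    (f : (Fin d → ℝ) → ℝ) (hf_nonneg : ∀ z, 0 ≤ f z)
    (hf_int : Integrable f)
    (φ : (Fin d → ℝ) → ℝ) (hφ_meas : Measurable φ)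
    (hφ_nonneg : ∀ z, 0 ≤ φ z) (C : ℝ) (hφ_bdd : ∀ z, φ z ≤ C)
    (n : ℕ) (hn : 1 ≤ n) :
    ∫ z : Fin n → (Fin d → ℝ),
        ((∑ i : Fin n, (f (z i) / g (z i)) * φ (z i)) /
            (∑ j : Fin n, f (z j) / g (z j))) *
          ((1 / (n : ℝ)) * ∑ j : Fin n, f (z j) / g (z j)) *
          ∏ k : Fin n, g (z k)
      = ∫ z, φ z * f z := by
  have hg_int : Integrable g := .of_integral_ne_zero (hg_prob ▸ one_ne_zero)
  have hφf_int : Integrable fun z => φ z * f z :=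
    hf_int.bdd_mul hφ_meas.aestronglyMeasurable
      (.of_forall fun z => (Real.norm_of_nonneg (hφ_nonneg z)).trans_le (hφ_bdd z))
  have integrand_eq (z : Fin n → Fin d → ℝ) :
      (∑ i, f (z i) / g (z i) * φ (z i)) / (∑ j, f (z j) / g (z j)) *
          ((1 / (n : ℝ)) * ∑ j, f (z j) / g (z j)) * ∏ k, g (z k)
        = 1 / (n : ℝ) * ∑ i, φ (z i) * f (z i) * ∏ k ∈ univ.erase i, g (z k) := by
    rw [mul_left_comm, mul_assoc (1 / (n : ℝ)), sum_mul_div_sum_mul_sum _ _ fun i _ =>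
      div_nonneg (hf_nonneg _) (hg_pos _).le, sum_mul]
    congr 1
    refine sum_congr rfl fun i _ => ?_
    rw [mul_comm (f (z i) / g (z i)), mul_assoc,
      div_mul_prod_eq_mul_prod_erase (mem_univ i) _ (b := fun k => g (z k)) (hg_pos _).ne',
      mul_assoc]
  simp_rw [integrand_eq]
  rw [integral_const_mul, integral_finsetSum (μ := volume) _ fun i _ =>
    integrable_mul_prod_erase hg_int hφf_int i]
  have hmarg (i : Fin n) :
      ∫ z : Fin n → Fin d → ℝ, φ (z i) * f (z i) * ∏ k ∈ univ.erase i, g (z k)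
        = ∫ z, φ z * f z :=
    integral_mul_prod_erase hg_prob (fun z => φ z * f z) i
  have hn0 : (n : ℝ) ≠ 0 := Nat.cast_ne_zero.mpr (by omega)
  rw [sum_congr rfl fun i _ => hmarg i, sum_const, card_univ, Fintype.card_fin, nsmul_eq_mul,
    one_div, inv_mul_cancel_left₀ hn0]

/-- **Proposition 5** (recovery of the marginalized variable), tested against a
nonnegative bounded measurable function `φ`. With importance weights
`w z = f z / g z` (where `g` is an everywhere-positive probability density and
`f` is nonnegative and integrable), sampling from the self-normalized discrete
distribution under the weighted joint recovers `∫ φ z * f z dz`: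
`∫ [(∑ i, w (z i) φ (z i)) / (∑ j, w (z j))] · [(1/n) ∑ j, w (z j)] · ∏ k, g (z k) dz
  = ∫ φ z * f z dz` (with the convention that the ratio is `0` when its
denominator is `0`, which is Lean's convention for division by zero). -/
theorem self_normalized_recovery_unbiased
    (d : ℕ) (hd : 1 ≤ d)
    (g : (Fin d → ℝ) → ℝ) (hg_meas : Measurable g)
    (hg_nonneg : ∀ z, 0 ≤ g z) (hg_prob : ∫ z, g z = 1)
    (hg_pos : ∀ z, 0 < g z)
    (f : (Fin d → ℝ) → ℝ) (hf_nonneg : ∀ z, 0 ≤ f z)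
    (hf_int : Integrable f)
    (φ : (Fin d → ℝ) → ℝ) (hφ_meas : Measurable φ)
    (hφ_nonneg : ∀ z, 0 ≤ φ z) (C : ℝ) (hφ_bdd : ∀ z, φ z ≤ C)
    (n : ℕ) (hn : 1 ≤ n) :
    ∫ z : Fin n → (Fin d → ℝ),
        ((∑ i : Fin n, (f (z i) / g (z i)) * φ (z i)) /
            (∑ j : Fin n, f (z j) / g (z j))) *
          ((1 / (n : ℝ)) * ∑ j : Fin n, f (z j) / g (z j)) *
          ∏ k : Fin n, g (z k)
      = ∫ z, φ z * f z :=
  self_normalized_recovery_unbiased_general d g hg_prob hg_pos f hf_nonneg hf_int φ hφ_meas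
    hφ_nonneg C hφ_bdd n hn
end

section
/- Let d ≥ 1, let K be an invertible real d×d matrix, let c : ℝ × ℝ^d → ℝ^d be differentiable at the point (η₀, ẑ(η₀)), with partial derivative in the first argument equal to a vector c_η ∈ ℝ^d and partial derivative in the second argument equal to the linear map v ↦ −W v for a d×d matrix W, and let ẑ : ℝ → ℝ^d be differentiable at η₀ and satisfy ẑ(η) = K · c(η, ẑ(η)) for all η in a neighborhood of η₀. If K⁻¹ + W is invertible, then ẑ'(η₀) = (K⁻¹ + W)⁻¹ · c_η. (This is the implicit-function-theorem computation of ∂ẑ/∂η_i in the adjoint-differentiated Laplace approximation, where c(η, z) = ∇_z log π(y|η,z).) -/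
/-!
Differentiating the fixed-point equation `ẑ = K · c(η, ẑ)` by the chain rule, with the total
derivative of `c` split into its partials, gives `ẑ' = K (c_η - W ẑ')`; multiplying by `K⁻¹`
this is `(K⁻¹ + W) ẑ' = c_η`.
-/

open Topology
open scoped Matrix

section PartialDerivatives

variable {𝕜 E F : Type*} [NontriviallyNormedField 𝕜]
  [NormedAddCommGroup E] [NormedSpace 𝕜 E] [NormedAddCommGroup F] [NormedSpace 𝕜 F]

theorem HasDerivAt.comp_prodMk_of_partials {f : 𝕜 × E → F} {g : 𝕜 → E} {x : 𝕜} {a : F}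
    {g' : E} {B : E →L[𝕜] F} (hf : DifferentiableAt 𝕜 f (x, g x))
    (h₁ : HasDerivAt (fun t => f (t, g x)) a x) (h₂ : HasFDerivAt (fun y => f (x, y)) B (g x))
    (hg : HasDerivAt g g' x) :
    HasDerivAt (fun t => f (t, g t)) (a + B g') x := by
  set D := fderiv 𝕜 f (x, g x)
  have hD : HasFDerivAt f D (x, g x) := hf.hasFDerivAt
  have hD₁ : D (1, 0) = a :=
    (hD.comp_hasDerivAt x ((hasDerivAt_id x).prodMk (hasDerivAt_const x (g x)))).unique h₁
  have hD₂ : D.comp (.inr 𝕜 𝕜 E) = B :=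
    (hD.comp (g x) (hasFDerivAt_prodMk_right x (g x))).unique h₂
  have hsplit : ((1 : 𝕜), g') = (1, 0) + (0, g') := by simp
  have htotal := hD.comp_hasDerivAt x ((hasDerivAt_id x).prodMk hg)
  rw [hsplit, map_add, hD₁] at htotal
  rw [← hD₂]
  exact htotal

end PartialDerivatives

theorem Matrix.eq_inv_add_mulVec_of_eq_mulVec_sub {n R : Type*} [Fintype n] [DecidableEq n]
    [CommRing R] {K W : Matrix n n R} {v z : n → R} (hK : IsUnit K) (hKW : IsUnit (K⁻¹ + W))
    (hz : z = K *ᵥ (v - W *ᵥ z)) : z = (K⁻¹ + W)⁻¹ *ᵥ v := by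
  have := hK.invertible
  have := hKW.invertible
  have hKz : K⁻¹ *ᵥ z = v - W *ᵥ z := inv_mulVec_eq_vec hz
  refine (inv_mulVec_eq_vec ?_).symm
  rw [add_mulVec, hKz, sub_add_cancel]

theorem laplace_mode_derivative_eta_general
    (d : ℕ)
    (K : Matrix (Fin d) (Fin d) ℝ) (hK : IsUnit K)
    (c : ℝ → (Fin d → ℝ) → (Fin d → ℝ))
    (cη : Fin d → ℝ) (W : Matrix (Fin d) (Fin d) ℝ)
    (η₀ : ℝ) (zhat : ℝ → (Fin d → ℝ))
    (hc_diff : DifferentiableAt ℝ (fun p : ℝ × (Fin d → ℝ) => c p.1 p.2) (η₀, zhat η₀))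
    (hc_fst : HasDerivAt (fun η => c η (zhat η₀)) cη η₀)
    (hc_snd : HasFDerivAt (fun z => c η₀ z)
      (LinearMap.toContinuousLinearMap ((-W).mulVecLin)) (zhat η₀))
    (hzhat : DifferentiableAt ℝ zhat η₀)
    (hfix : ∀ᶠ η in 𝓝 η₀, zhat η = K.mulVec (c η (zhat η)))
    (hunit : IsUnit (K⁻¹ + W)) :
    deriv zhat η₀ = ((K⁻¹ + W)⁻¹).mulVec cη := by
  set z' := deriv zhat η₀
  have hc : HasDerivAt (fun η => c η (zhat η)) (cη - W *ᵥ z') η₀ := by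
    simpa [Matrix.neg_mulVec, sub_eq_add_neg] using
      HasDerivAt.comp_prodMk_of_partials hc_diff hc_fst hc_snd hzhat.hasDerivAt
  have hKc : HasDerivAt zhat (K *ᵥ (cη - W *ᵥ z')) η₀ :=
    ((LinearMap.toContinuousLinearMap K.mulVecLin).hasFDerivAt.comp_hasDerivAt η₀ hc
      ).congr_of_eventuallyEq hfix
  exact Matrix.eq_inv_add_mulVec_of_eq_mulVec_sub hK hunit (hzhat.hasDerivAt.unique hKc)

/-- Implicit-function-theorem computation of `∂ẑ/∂η` in the
adjoint-differentiated Laplace approximation. If `K` is invertible,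
`c : ℝ × ℝ^d → ℝ^d` is differentiable at `(η₀, zhat η₀)` with partial
derivative `c_η` in the first argument and partial derivative `v ↦ −W v` in
the second argument, `zhat` is differentiable at `η₀` and satisfies
`zhat η = K · c (η, zhat η)` near `η₀`, and `K⁻¹ + W` is invertible, then
`zhat'(η₀) = (K⁻¹ + W)⁻¹ · c_η`. -/
theorem laplace_mode_derivative_eta
    (d : ℕ) (hd : 1 ≤ d)
    (K : Matrix (Fin d) (Fin d) ℝ) (hK : IsUnit K)
    (c : ℝ → (Fin d → ℝ) → (Fin d → ℝ))
    (cη : Fin d → ℝ) (W : Matrix (Fin d) (Fin d) ℝ)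
    (η₀ : ℝ) (zhat : ℝ → (Fin d → ℝ))
    (hc_diff : DifferentiableAt ℝ (fun p : ℝ × (Fin d → ℝ) => c p.1 p.2) (η₀, zhat η₀))
    (hc_fst : HasDerivAt (fun η => c η (zhat η₀)) cη η₀)
    (hc_snd : HasFDerivAt (fun z => c η₀ z)
      (LinearMap.toContinuousLinearMap ((-W).mulVecLin)) (zhat η₀))
    (hzhat : DifferentiableAt ℝ zhat η₀)
    (hfix : ∀ᶠ η in 𝓝 η₀, zhat η = K.mulVec (c η (zhat η)))
    (hunit : IsUnit (K⁻¹ + W)) :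
    deriv zhat η₀ = ((K⁻¹ + W)⁻¹).mulVec cη :=
  laplace_mode_derivative_eta_general d K hK c cη W η₀ zhat hc_diff hc_fst hc_snd hzhat hfix hunit
end
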